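/- Let I = [T0,T], let g_i : I × ℝⁿ → ℝ for i = 1,…,m, and set C(t) := {x ∈ ℝⁿ : g_i(t,x) ≤ 0 for all i = 1,…,m}, assumed nonempty, closed and r-prox-regular with a common constant r ∈ (0,∞] for every t ∈ I, with each g_i(t,·) continuously differentiable on U_r(C(t)) := {y ∈ ℝⁿ : d_{C(t)}(y) < r}. Assume there exist an absolutely continuous function w : I → ℝ, a real δ > 0 and a vector y ∈ ℝⁿ with ‖y‖ = 1 such that for each i = 1,…,m: g_i(t,x) ≤ g_i(s,x) + |w(t) − w(s)| for all s, t ∈ I and all x ∈ U_r(C(s)); and ⟨∇g_i(t,·)(x), y⟩ ≤ −δ for all t ∈ I and all x ∈ U_r(C(t)). Then, setting υ := δ^{-1}·w, one has C(s) ⊆ C(t) + |υ(t) − υ(s)|·B for all s, t ∈ I, where B is the closed unit ball of ℝⁿ; that is, C(·) has an absolutely continuous variation on I with modulus υ. -/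

import Mathlib

open MeasureTheory Set
open scoped RealInnerProductSpace ENNReal Pointwise NNReal

noncomputable section

variable {H : Type*} [NormedAddCommGroup H] [InnerProductSpace ℝ H]

/-- The proximal normal cone of `S` at `x`. -/
def proxNormalCone (S : Set H) (x : H) : Set H :=
  {v | ∃ σ : ℝ, 0 ≤ σ ∧ ∃ δ : ℝ, 0 < δ ∧
    ∀ y ∈ S ∩ Metric.ball x δ, ⟪v, y - x⟫ ≤ σ * ‖y - x‖ ^ 2}

/-- Uniform `r`-prox-regularity, `r ∈ (0, ∞]`. -/
def IsProxRegular (r : ℝ≥0∞) (S : Set H) : Prop :=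
  ∀ x ∈ S, ∀ v ∈ proxNormalCone S x, v ≠ 0 →
    ∀ y ∈ S, ⟪‖v‖⁻¹ • v, y - x⟫ ≤ ((2 * r)⁻¹).toReal * ‖y - x‖ ^ 2

variable [CompleteSpace H]

/-!
In the direction `y` every constraint `g i s` decreases at rate at least `δ` on `U_r(C(s))`.
A ray issued from `C(s)` can be followed in steps shorter than `r`: each step stays in
`U_r(C(s))` and, the constraints having decreased, ends in `C(s)` again. Hence for `x ∈ C(s)` and
`l = |w(t) - w(s)| / δ` the point `x + l y` lies in `C(s)` with `g i s (x + l y) ≤ -|w(t) - w(s)|`,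
and the comparison between `g i t` and `g i s` on `U_r(C(s))` puts it in `C(t)`, at distance `l`
from `x`.
-/

section Descent

variable {E : Type*} [NormedAddCommGroup E] [NormedSpace ℝ E]

theorem apply_add_smul_le_of_fderiv_apply_le {f : E → ℝ} {x y : E} {δ l : ℝ} (hl : 0 ≤ l)
    (hf : ∀ τ ∈ Icc 0 l, DifferentiableAt ℝ f (x + τ • y))
    (hf' : ∀ τ ∈ Icc 0 l, fderiv ℝ f (x + τ • y) y ≤ -δ) :
    f (x + l • y) ≤ f x - δ * l := by
  have hφ : ∀ τ ∈ Icc 0 l,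
      HasDerivAt (fun τ : ℝ => f (x + τ • y)) (fderiv ℝ f (x + τ • y) y) τ := fun τ hτ =>
    (hf τ hτ).hasFDerivAt.comp_hasDerivAt τ
      (by simpa using ((hasDerivAt_id τ).smul_const y).const_add x)
  have hint : ∀ τ ∈ interior (Icc 0 l), τ ∈ Icc 0 l := fun τ hτ => interior_subset hτ
  have key := (convex_Icc 0 l).image_sub_le_mul_sub_of_deriv_le
    (fun τ hτ => (hφ τ hτ).continuousAt.continuousWithinAt)
    (fun τ hτ => (hφ τ (hint τ hτ)).differentiableAt.differentiableWithinAt)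
    (fun τ hτ => (hφ τ (hint τ hτ)).deriv ▸ hf' τ (hint τ hτ))
    0 (left_mem_Icc.2 hl) l (right_mem_Icc.2 hl) hl
  simp only [zero_smul, add_zero, sub_zero] at key
  linarith

theorem apply_add_smul_le_of_sublevel {ι : Type*} {f : ι → E → ℝ} {U : Set E} {y : E}
    {c δ : ℝ} (hc : 0 < c) (hδ : 0 ≤ δ) (hy : ‖y‖ ≤ 1) (hU : IsOpen U)
    (hK : ∀ z, (∀ i, f i z ≤ 0) → Metric.closedBall z c ⊆ U)
    (hf : ∀ i, DifferentiableOn ℝ (f i) U) (hf' : ∀ i, ∀ u ∈ U, fderiv ℝ (f i) u y ≤ -δ)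
    {x : E} (hx : ∀ i, f i x ≤ 0) {τ : ℝ} (hτ : 0 ≤ τ) (i : ι) :
    f i (x + τ • y) ≤ f i x - δ * τ := by
  have step : ∀ z, (∀ i, f i z ≤ 0) → ∀ τ ∈ Icc 0 c, ∀ i, f i (z + τ • y) ≤ f i z - δ * τ := by
    intro z hz τ hτ i
    have hseg : ∀ σ ∈ Icc 0 τ, z + σ • y ∈ U := fun σ hσ => hK z hz <| by
      rw [Metric.mem_closedBall, dist_self_add_left, norm_smul, Real.norm_of_nonneg hσ.1]
      nlinarith [hσ.2, hτ.2, norm_nonneg y]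
    exact apply_add_smul_le_of_fderiv_apply_le hτ.1
      (fun σ hσ => (hf i).differentiableAt (hU.mem_nhds (hseg σ hσ)))
      (fun σ hσ => hf' i _ (hseg σ hσ))
  obtain ⟨N, hN⟩ : ∃ N : ℕ, τ ≤ N * c := by
    obtain ⟨N, hN⟩ := exists_nat_ge (τ / c)
    exact ⟨N, (div_le_iff₀ hc).1 hN⟩
  induction N generalizing x τ with
  | zero =>
    obtain rfl : τ = 0 := by simp only [CharP.cast_eq_zero, zero_mul] at hN; linarith
    simp
  | succ N ih =>
    rcases le_or_gt τ c with hτc | hcτ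
    · exact step x hx τ ⟨hτ, hτc⟩ i
    · have hxc := step x hx c ⟨hc.le, le_rfl⟩
      have hz : ∀ j, f j (x + c • y) ≤ 0 := fun j => (hxc j).trans (by nlinarith [hx j])
      have := ih hz (τ := τ - c) (by linarith) (by push_cast at hN; linarith)
      rw [add_assoc, ← add_smul, add_sub_cancel] at this
      linarith [hxc i]

theorem mem_add_smul_closedBall_of_add_smul_mem {S : Set E} {x y : E} {a : ℝ}
    (hy : ‖y‖ ≤ 1) (h : x + a • y ∈ S) : x ∈ S + a • Metric.closedBall (0 : E) 1 :=
  ⟨x + a • y, h, a • -y, smul_mem_smul_set (by simpa using hy), by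
    simp only [smul_neg, add_neg_cancel_right]⟩

end Descent

section Neighbourhood

variable {X : Type*} [PseudoMetricSpace X]

theorem isOpen_setOf_ofReal_infDist_lt (S : Set X) (r : ℝ≥0∞) :
    IsOpen {z | ENNReal.ofReal (Metric.infDist z S) < r} :=
  isOpen_Iio.preimage (ENNReal.continuous_ofReal.comp (Metric.continuous_infDist_pt S))

theorem closedBall_subset_setOf_ofReal_infDist_lt {S : Set X} {z : X} (hz : z ∈ S) {c : ℝ}
    {r : ℝ≥0∞} (hcr : ENNReal.ofReal c < r) :
    Metric.closedBall z c ⊆ {u | ENNReal.ofReal (Metric.infDist u S) < r} := fun _ hu =>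
  (ENNReal.ofReal_le_ofReal ((Metric.infDist_le_dist_of_mem hz).trans hu)).trans_lt hcr

end Neighbourhood

theorem absolutely_continuous_variation_of_inequality_constraints_general
    (T0 T : ℝ) (n m : ℕ)
    (g : Fin m → ℝ → EuclideanSpace ℝ (Fin n) → ℝ)
    (C : ℝ → Set (EuclideanSpace ℝ (Fin n)))
    (hCdef : ∀ t ∈ Icc T0 T, C t = {x | ∀ i : Fin m, g i t x ≤ 0})
    (r : ℝ≥0∞) (hr : 0 < r)
    (hdiff : ∀ t ∈ Icc T0 T, ∀ i : Fin m,
      ContDiffOn ℝ 1 (g i t) {y | ENNReal.ofReal (Metric.infDist y (C t)) < r})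
    (w : ℝ → ℝ)
    (δ : ℝ) (hδ : 0 < δ)
    (y : EuclideanSpace ℝ (Fin n)) (hy : ‖y‖ = 1)
    (hmono : ∀ i : Fin m, ∀ s ∈ Icc T0 T, ∀ t ∈ Icc T0 T,
      ∀ x : EuclideanSpace ℝ (Fin n), ENNReal.ofReal (Metric.infDist x (C s)) < r →
        g i t x ≤ g i s x + |w t - w s|)
    (hgrad : ∀ i : Fin m, ∀ t ∈ Icc T0 T,
      ∀ x : EuclideanSpace ℝ (Fin n), ENNReal.ofReal (Metric.infDist x (C t)) < r →
        ⟪gradient (g i t) x, y⟫ ≤ -δ) :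
    ∀ s ∈ Icc T0 T, ∀ t ∈ Icc T0 T,
      C s ⊆ C t + |δ⁻¹ * w t - δ⁻¹ * w s| • Metric.closedBall (0 : EuclideanSpace ℝ (Fin n)) 1 := by
  intro s hs t ht x hx
  have hδl : δ * |δ⁻¹ * w t - δ⁻¹ * w s| = |w t - w s| := by
    rw [← mul_sub, abs_mul, abs_inv, abs_of_pos hδ, mul_inv_cancel_left₀ hδ.ne']
  set l := |δ⁻¹ * w t - δ⁻¹ * w s|
  obtain ⟨c, hc, hcr⟩ : ∃ c : ℝ, 0 < c ∧ ENNReal.ofReal c < r := by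
    obtain ⟨c, -, hc, hcr⟩ := ENNReal.lt_iff_exists_real_btwn.1 hr
    exact ⟨c, ENNReal.ofReal_pos.1 hc, hcr⟩
  have hxC : ∀ i, g i s x ≤ 0 := by rw [hCdef s hs] at hx; exact hx
  have hdesc : ∀ i, g i s (x + l • y) ≤ g i s x - δ * l :=
    apply_add_smul_le_of_sublevel hc hδ.le hy.le
      (isOpen_setOf_ofReal_infDist_lt _ r)
      (fun z hz => closedBall_subset_setOf_ofReal_infDist_lt (by rw [hCdef s hs]; exact hz) hcr)
      (fun i => (hdiff s hs i).differentiableOn one_ne_zero)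
      (fun i u hu => by rw [← inner_gradient_left]; exact hgrad i s hs u hu) hxC (abs_nonneg _)
  have hmem : x + l • y ∈ C s := by
    rw [hCdef s hs]
    intro i
    linarith [hdesc i, hxC i, abs_nonneg (w t - w s)]
  refine mem_add_smul_closedBall_of_add_smul_mem hy.le ?_
  rw [hCdef t ht]
  intro i
  have := hmono i s hs t ht (x + l • y) (by simpa [Metric.infDist_zero_of_mem hmem] using hr)
  linarith [hdesc i, hxC i]

/-- Proposition 5.2: sufficient conditions for the absolutely continuous
variation of a moving set described by inequality constraints. -/
theorem absolutely_continuous_variation_of_inequality_constraints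
    (T0 T : ℝ) (hT : T0 < T) (n m : ℕ)
    (g : Fin m → ℝ → EuclideanSpace ℝ (Fin n) → ℝ)
    (C : ℝ → Set (EuclideanSpace ℝ (Fin n)))
    (hCdef : ∀ t ∈ Icc T0 T, C t = {x | ∀ i : Fin m, g i t x ≤ 0})
    (r : ℝ≥0∞) (hr : 0 < r)
    (hC : ∀ t ∈ Icc T0 T, (C t).Nonempty ∧ IsClosed (C t) ∧ IsProxRegular r (C t))
    (hdiff : ∀ t ∈ Icc T0 T, ∀ i : Fin m,
      ContDiffOn ℝ 1 (g i t) {y | ENNReal.ofReal (Metric.infDist y (C t)) < r})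
    (w w' : ℝ → ℝ)
    (hwint : IntervalIntegrable w' volume T0 T)
    (hwAC : ∀ t ∈ Icc T0 T, w t = w T0 + ∫ s in T0..t, w' s)
    (δ : ℝ) (hδ : 0 < δ)
    (y : EuclideanSpace ℝ (Fin n)) (hy : ‖y‖ = 1)
    (hmono : ∀ i : Fin m, ∀ s ∈ Icc T0 T, ∀ t ∈ Icc T0 T,
      ∀ x : EuclideanSpace ℝ (Fin n), ENNReal.ofReal (Metric.infDist x (C s)) < r →
        g i t x ≤ g i s x + |w t - w s|)
    (hgrad : ∀ i : Fin m, ∀ t ∈ Icc T0 T,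
      ∀ x : EuclideanSpace ℝ (Fin n), ENNReal.ofReal (Metric.infDist x (C t)) < r →
        ⟪gradient (g i t) x, y⟫ ≤ -δ) :
    ∀ s ∈ Icc T0 T, ∀ t ∈ Icc T0 T,
      C s ⊆ C t + |δ⁻¹ * w t - δ⁻¹ * w s| • Metric.closedBall (0 : EuclideanSpace ℝ (Fin n)) 1 :=
  absolutely_continuous_variation_of_inequality_constraints_general T0 T n m g C hCdef r hr hdiff w
    δ hδ y hy hmono hgrad
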